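/- arXiv:2603.20215 — 2 statements merged into one kernel-verified Lean document; each statement's English description precedes it below -/
import Mathlib

section
/- Let N_a be a positive integer, α > 0, p ∈ [0,1], and let j* = ⌊N_a - (ln 2)/α⌋. Suppose N_cor^(2), conditioned on the event {N_cor^(1) = j}, is Binomial(N_a, e^{α(j - N_a)}), where N_cor^(1) ~ Binomial(N_a, p). Then P(N_cor^(2) > N_a/2) ≤ ∑_{j=0}^{min(j*, N_a)} ω_j · exp(-2N_a(1/2 - e^{α(j - N_a)})²) + ∑_{j=min(j*,N_a)+1}^{N_a} ω_j, where ω_j = C(N_a,j) p^j (1-p)^{N_a - j}. -/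
open Finset
open scoped Classical

/-- Probability that a Binomial(N, p) random variable equals k. -/
noncomputable def binomPMF (N : ℕ) (p : ℝ) (k : ℕ) : ℝ :=
  (N.choose k : ℝ) * p ^ k * (1 - p) ^ (N - k)

/-- `P(X > N/2)` for `X ~ Binomial(N, p)` (majority-vote success probability). -/
noncomputable def majTail (N : ℕ) (p : ℝ) : ℝ :=
  ∑ k ∈ (Finset.range (N + 1)).filter (fun k : ℕ => (N : ℝ) / 2 < (k : ℝ)),
    binomPMF N p k

lemma posD {q : ℝ} (hq0 : 0 ≤ q) (hq1 : q ≤ 1) (t : ℝ) :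
    0 < 1 - q + q * Real.exp t := by
  nlinarith [Real.exp_pos t, mul_nonneg hq0 (Real.exp_pos t).le,
    mul_nonneg (sub_nonneg.2 hq1) (Real.exp_pos t).le]

lemma hoeffding_bernoulli {q : ℝ} (hq0 : 0 ≤ q) (hq1 : q ≤ 1) {t : ℝ} (ht : 0 ≤ t) :
    1 - q + q * Real.exp t ≤ Real.exp (q * t + t ^ 2 / 8) := by
  set φ : ℝ → ℝ := fun s => q + s / 4 - q * Real.exp s / (1 - q + q * Real.exp s) with hφ
  set g : ℝ → ℝ := fun s => q * s + s ^ 2 / 8 - Real.log (1 - q + q * Real.exp s) with hg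
  have hDd : ∀ s : ℝ, HasDerivAt (fun u => 1 - q + q * Real.exp u) (q * Real.exp s) s :=
    fun s => ((Real.hasDerivAt_exp s).const_mul q).const_add (1 - q)
  have hφd : ∀ s : ℝ, HasDerivAt φ
      (1/4 - q * Real.exp s * (1 - q) / (1 - q + q * Real.exp s) ^ 2) s := by
    intro s
    have h1 : HasDerivAt (fun u : ℝ => q * Real.exp u / (1 - q + q * Real.exp u))
        ((q * Real.exp s * (1 - q + q * Real.exp s) - q * Real.exp s * (q * Real.exp s)) /
          (1 - q + q * Real.exp s) ^ 2) s :=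
      ((Real.hasDerivAt_exp s).const_mul q).div (hDd s) (posD hq0 hq1 s).ne'
    have h2 : HasDerivAt (fun u : ℝ => q + u / 4) (1/4) s := by
      simpa using ((hasDerivAt_id s).div_const 4).const_add q
    have := h2.sub h1
    exact this.congr_deriv (by ring)
  have hφderiv : ∀ s : ℝ, 0 ≤ deriv φ s := by
    intro s
    rw [(hφd s).deriv]
    have hD := posD hq0 hq1 s
    rw [sub_nonneg, div_le_iff₀ (by positivity)]
    nlinarith [sq_nonneg (1 - q - q * Real.exp s), (Real.exp_pos s).le]
  have hφmono : Monotone φ := monotone_of_deriv_nonneg (fun s => (hφd s).differentiableAt) hφderiv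
  have hφ0 : φ 0 = 0 := by simp [hφ]
  have hφnonneg : ∀ s : ℝ, 0 ≤ s → 0 ≤ φ s := by
    intro s hs
    rw [← hφ0]; exact hφmono hs
  have hgd : ∀ s : ℝ, HasDerivAt g (φ s) s := by
    intro s
    have h1 : HasDerivAt (fun u : ℝ => Real.log (1 - q + q * Real.exp u))
        (q * Real.exp s / (1 - q + q * Real.exp s)) s :=
      (hDd s).log (posD hq0 hq1 s).ne'
    have h2 : HasDerivAt (fun u : ℝ => q * u + u ^ 2 / 8) (q + s * 2 / 8 * 1) s := by
      exact ((hasDerivAt_id s).const_mul q).add (((hasDerivAt_pow 2 s)).div_const 8) |>.congr_deriv (by push_cast; ring)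
    have := h2.sub h1
    exact this.congr_deriv (by simp only [hφ]; ring)
  have hgmono : MonotoneOn g (Set.Ici 0) := by
    apply monotoneOn_of_deriv_nonneg (convex_Ici 0)
      (fun s _ => (hgd s).differentiableAt.continuousAt.continuousWithinAt)
    · intro s _; exact (hgd s).differentiableAt.differentiableWithinAt
    · intro s hs
      rw [(hgd s).deriv]
      exact hφnonneg s (le_of_lt (by simpa using hs))
  have hg0 : g 0 = 0 := by simp [hg]
  have hgt : 0 ≤ g t := by
    rw [← hg0]
    exact hgmono (Set.self_mem_Ici) (Set.mem_Ici.2 ht) ht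
  have hlog : Real.log (1 - q + q * Real.exp t) ≤ q * t + t ^ 2 / 8 := by
    have := hgt; simp only [hg] at this; linarith
  calc 1 - q + q * Real.exp t
      = Real.exp (Real.log (1 - q + q * Real.exp t)) := (Real.exp_log (posD hq0 hq1 t)).symm
    _ ≤ Real.exp (q * t + t ^ 2 / 8) := Real.exp_le_exp.2 hlog

lemma majTail_le_one {N : ℕ} {q : ℝ} (hq0 : 0 ≤ q) (hq1 : q ≤ 1) :
    majTail N q ≤ 1 := by
  have h1 : majTail N q ≤ ∑ k ∈ Finset.range (N + 1), binomPMF N q k := by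
    apply Finset.sum_le_sum_of_subset_of_nonneg (Finset.filter_subset _ _)
    intro k _ _
    unfold binomPMF
    have : (0:ℝ) ≤ 1 - q := by linarith
    positivity
  have h2 : ∑ k ∈ Finset.range (N + 1), binomPMF N q k = 1 := by
    have := add_pow q (1 - q) N
    simp only [binomPMF]
    rw [show q + (1 - q) = 1 by ring] at this
    rw [one_pow] at this
    rw [show (∑ x ∈ Finset.range (N+1), (N.choose x : ℝ) * q ^ x * (1 - q) ^ (N - x))
        = ∑ m ∈ Finset.range (N+1), q ^ m * (1 - q) ^ (N - m) * (N.choose m : ℝ) from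
      Finset.sum_congr rfl (fun k _ => by ring), ← this]
  linarith

lemma majTail_le_exp {N : ℕ} {q : ℝ} (hq0 : 0 ≤ q) (hq2 : q ≤ 1/2) :
    majTail N q ≤ Real.exp (-2 * N * (1/2 - q) ^ 2) := by
  have hq1 : q ≤ 1 := by linarith
  have h1q : (0:ℝ) ≤ 1 - q := by linarith
  set t : ℝ := 4 * (1/2 - q) with hts
  have ht : 0 ≤ t := by simp only [hts]; linarith
  have step1 : majTail N q ≤
      ∑ k ∈ Finset.range (N + 1),
        binomPMF N q k * Real.exp (t * ((k : ℝ) - (N : ℝ) / 2)) := by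
    have hsub : majTail N q ≤
        ∑ k ∈ (Finset.range (N + 1)).filter (fun k : ℕ => (N : ℝ) / 2 < (k : ℝ)),
          binomPMF N q k * Real.exp (t * ((k : ℝ) - (N : ℝ) / 2)) := by
      apply Finset.sum_le_sum
      intro k hk
      have hk2 : (N : ℝ) / 2 < (k : ℝ) := (Finset.mem_filter.1 hk).2
      have hexp : 1 ≤ Real.exp (t * ((k : ℝ) - (N : ℝ) / 2)) := by
        rw [Real.one_le_exp_iff]; exact mul_nonneg ht (by linarith)
      have hpos : 0 ≤ binomPMF N q k := by unfold binomPMF; positivity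
      nlinarith
    refine hsub.trans (Finset.sum_le_sum_of_subset_of_nonneg (Finset.filter_subset _ _) ?_)
    intro k _ _
    have : 0 ≤ binomPMF N q k := by unfold binomPMF; positivity
    positivity
  have step2 : ∑ k ∈ Finset.range (N + 1),
      binomPMF N q k * Real.exp (t * ((k : ℝ) - (N : ℝ) / 2))
      = Real.exp (-(t * N / 2)) * (q * Real.exp t + (1 - q)) ^ N := by
    rw [add_pow, Finset.mul_sum]
    apply Finset.sum_congr rfl
    intro k hk
    have hkN : k ≤ N := Nat.lt_succ_iff.1 (Finset.mem_range.1 hk)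
    unfold binomPMF
    rw [mul_pow, ← Real.exp_nat_mul]
    rw [show t * ((k:ℝ) - (N:ℝ)/2) = (k:ℝ) * t + (-(t * N / 2)) by ring,
      Real.exp_add]
    ring
  have step3 : (q * Real.exp t + (1 - q)) ^ N ≤ Real.exp (N * (q * t + t ^ 2 / 8)) := by
    have hb := hoeffding_bernoulli hq0 hq1 ht
    calc (q * Real.exp t + (1 - q)) ^ N
        ≤ (Real.exp (q * t + t ^ 2 / 8)) ^ N := by
          apply pow_le_pow_left₀ (by positivity)
          linarith
      _ = Real.exp (N * (q * t + t ^ 2 / 8)) := by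
          rw [← Real.exp_nat_mul]
  calc majTail N q ≤ Real.exp (-(t * N / 2)) * (q * Real.exp t + (1 - q)) ^ N :=
        step1.trans (le_of_eq step2)
    _ ≤ Real.exp (-(t * N / 2)) * Real.exp (N * (q * t + t ^ 2 / 8)) := by
        apply mul_le_mul_of_nonneg_left step3 (Real.exp_pos _).le
    _ = Real.exp (-2 * N * (1/2 - q) ^ 2) := by
        rw [← Real.exp_add]
        congr 1
        simp only [hts]; ring

/-- MAD upper bound (Proposition 2, upper part): in the 2-round debate model,
`P(N_cor⁽²⁾ > N_a/2) ≤ ∑_{j ≤ min(j*, N_a)} ω_j exp(-2N_a(1/2 - e^{α(j-N_a)})²)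
  + ∑_{j > min(j*, N_a)} ω_j`. -/
theorem mad_upper_bound (Na : ℕ) (hNa : 0 < Na) (α p : ℝ)
    (hα : 0 < α) (hp0 : 0 ≤ p) (hp1 : p ≤ 1) :
    (∑ j ∈ Finset.range (Na + 1),
        ((Na.choose j : ℝ) * p ^ j * (1 - p) ^ (Na - j)) *
          majTail Na (Real.exp (α * ((j : ℝ) - Na))))
      ≤ (∑ j ∈ (Finset.range (Na + 1)).filter
            (fun j : ℕ => (j : ℤ) ≤ min ⌊(Na : ℝ) - Real.log 2 / α⌋ (Na : ℤ)),
          ((Na.choose j : ℝ) * p ^ j * (1 - p) ^ (Na - j)) *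
            Real.exp (-2 * Na * (1 / 2 - Real.exp (α * ((j : ℝ) - Na))) ^ 2))
        + ∑ j ∈ (Finset.range (Na + 1)).filter
            (fun j : ℕ => min ⌊(Na : ℝ) - Real.log 2 / α⌋ (Na : ℤ) < (j : ℤ)),
          ((Na.choose j : ℝ) * p ^ j * (1 - p) ^ (Na - j)) := by
  classical
  set m : ℤ := min ⌊(Na : ℝ) - Real.log 2 / α⌋ (Na : ℤ) with hm
  have h1p : (0:ℝ) ≤ 1 - p := by linarith
  have hω : ∀ j : ℕ, 0 ≤ (Na.choose j : ℝ) * p ^ j * (1 - p) ^ (Na - j) := by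
    intro j; positivity
  have hsplit : (∑ j ∈ Finset.range (Na + 1),
        ((Na.choose j : ℝ) * p ^ j * (1 - p) ^ (Na - j)) *
          majTail Na (Real.exp (α * ((j : ℝ) - Na))))
      = (∑ j ∈ (Finset.range (Na + 1)).filter (fun j : ℕ => (j : ℤ) ≤ m),
          ((Na.choose j : ℝ) * p ^ j * (1 - p) ^ (Na - j)) *
            majTail Na (Real.exp (α * ((j : ℝ) - Na))))
        + ∑ j ∈ (Finset.range (Na + 1)).filter (fun j : ℕ => m < (j : ℤ)),
          ((Na.choose j : ℝ) * p ^ j * (1 - p) ^ (Na - j)) *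
            majTail Na (Real.exp (α * ((j : ℝ) - Na))) := by
    rw [← Finset.sum_filter_add_sum_filter_not (Finset.range (Na + 1))
      (fun j : ℕ => (j : ℤ) ≤ m)]
    congr 1
    apply Finset.sum_congr
    · apply Finset.filter_congr; intro j _; simp [not_le]
    · intro j _; rfl
  rw [hsplit]
  apply add_le_add
  · apply Finset.sum_le_sum
    intro j hj
    have hjm : (j : ℤ) ≤ ⌊(Na : ℝ) - Real.log 2 / α⌋ :=
      le_trans (Finset.mem_filter.1 hj).2 (min_le_left _ _)
    have hjr : (j : ℝ) ≤ (Na : ℝ) - Real.log 2 / α := by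
      have := Int.le_floor.1 hjm
      exact_mod_cast this
    have hq2 : Real.exp (α * ((j : ℝ) - Na)) ≤ 1 / 2 := by
      have harg : α * ((j : ℝ) - Na) ≤ -Real.log 2 := by
        have h1 : (j : ℝ) - Na ≤ -(Real.log 2 / α) := by linarith
        have h2 : α * ((j : ℝ) - Na) ≤ α * (-(Real.log 2 / α)) :=
          mul_le_mul_of_nonneg_left h1 hα.le
        have h3 : α * (-(Real.log 2 / α)) = -Real.log 2 := by
          field_simp
        linarith
      calc Real.exp (α * ((j : ℝ) - Na)) ≤ Real.exp (-Real.log 2) :=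
            Real.exp_le_exp.2 harg
        _ = 1 / 2 := by
            rw [Real.exp_neg, Real.exp_log (by norm_num : (0:ℝ) < 2)]
            norm_num
    exact mul_le_mul_of_nonneg_left (majTail_le_exp (Real.exp_pos _).le hq2) (hω j)
  · apply Finset.sum_le_sum
    intro j hj
    have hjN : j ≤ Na := Nat.lt_succ_iff.1 (Finset.mem_range.1 (Finset.mem_filter.1 hj).1)
    have hq1 : Real.exp (α * ((j : ℝ) - Na)) ≤ 1 := by
      rw [Real.exp_le_one_iff]
      have : (j : ℝ) ≤ (Na : ℝ) := by exact_mod_cast hjN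
      nlinarith
    calc ((Na.choose j : ℝ) * p ^ j * (1 - p) ^ (Na - j)) *
          majTail Na (Real.exp (α * ((j : ℝ) - Na)))
        ≤ ((Na.choose j : ℝ) * p ^ j * (1 - p) ^ (Na - j)) * 1 :=
          mul_le_mul_of_nonneg_left (majTail_le_one (Real.exp_pos _).le hq1) (hω j)
      _ = _ := mul_one _
end

section
/- Let N_a be a positive integer, α > 0, p ∈ [0,1], and j* = ⌊N_a - (ln 2)/α⌋. With the same 2-round debate model (round-2 correctness probability e^{α(j - N_a)} given j correct round-1 memories), P(N_cor^(2) > N_a/2) ≥ ∑_{j = j*+1}^{N_a} ω_j · (1 - exp(-2N_a(1/2 - e^{α(j - N_a)})²)), where ω_j = C(N_a,j) p^j (1-p)^{N_a - j}. -/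
open Finset
open scoped Classical

/-- Hoeffding's lemma, Bernoulli case. -/
lemma hoeff_mgf (q : ℝ) (hq0 : 0 ≤ q) (hq1 : q ≤ 1) {t : ℝ} (ht : 0 ≤ t) :
    q * Real.exp (-t) + (1 - q) ≤ Real.exp (t ^ 2 / 8 - q * t) := by
  set D : ℝ → ℝ := fun s => q * Real.exp (-s) + (1 - q) with hD
  have hDpos : ∀ s, 0 < D s := by
    intro s
    rcases eq_or_lt_of_le hq0 with h | h
    · simp [hD, ← h]
    · have := mul_pos h (Real.exp_pos (-s))
      simp only [hD]; nlinarith [Real.exp_pos (-s)]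
  -- derivative of D
  have hDderiv : ∀ s, HasDerivAt D (-(q * Real.exp (-s))) s := by
    intro s
    have h1 : HasDerivAt (fun s : ℝ => Real.exp (-s)) (-Real.exp (-s)) s := by
      simpa [Function.comp_def] using (Real.hasDerivAt_exp (-s)).comp s (hasDerivAt_neg s)
    have := (h1.const_mul q).add_const (1 - q)
    exact this.congr_deriv (by ring)
  -- g = derivative of h
  set g : ℝ → ℝ := fun s => s / 4 - q + q * Real.exp (-s) / D s with hg
  have hgderiv : ∀ s, HasDerivAt g (1 / 4 - q * (1 - q) * Real.exp (-s) / (D s) ^ 2) s := by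
    intro s
    have hu : HasDerivAt (fun s : ℝ => q * Real.exp (-s)) (-(q * Real.exp (-s))) s := by
      have h1 : HasDerivAt (fun s : ℝ => Real.exp (-s)) (-Real.exp (-s)) s := by
        simpa [Function.comp_def] using (Real.hasDerivAt_exp (-s)).comp s (hasDerivAt_neg s)
      simpa [mul_neg] using h1.const_mul q
    have hdiv := hu.div (hDderiv s) (hDpos s).ne'
    have hlin : HasDerivAt (fun s : ℝ => s / 4 - q) (1 / 4) s := by
      simpa using ((hasDerivAt_id s).div_const 4).sub_const q
    have := hlin.add hdiv
    refine this.congr_deriv ?_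
    have hds : D s = q * Real.exp (-s) + (1 - q) := rfl
    rw [hds]
    field_simp
    ring
  have hgnn : ∀ s, 0 ≤ 1 / 4 - q * (1 - q) * Real.exp (-s) / (D s) ^ 2 := by
    intro s
    rw [sub_nonneg, div_le_iff₀ (pow_pos (hDpos s) 2)]
    have hds : D s = q * Real.exp (-s) + (1 - q) := rfl
    nlinarith [sq_nonneg (q * Real.exp (-s) - (1 - q)), Real.exp_pos (-s)]
  have hgmono : Monotone g := monotone_of_hasDerivAt_nonneg hgderiv hgnn
  have hg0 : g 0 = 0 := by simp [hg, hD]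
  have hgpos : ∀ s, 0 ≤ s → 0 ≤ g s := fun s hs => hg0 ▸ hgmono hs
  -- h
  set h : ℝ → ℝ := fun s => s ^ 2 / 8 - q * s - Real.log (D s) with hh
  have hhderiv : ∀ s, HasDerivAt h (g s) s := by
    intro s
    have hlog : HasDerivAt (fun s => Real.log (D s)) (-(q * Real.exp (-s)) / D s) s :=
      (hDderiv s).log (hDpos s).ne'
    have hpoly : HasDerivAt (fun s : ℝ => s ^ 2 / 8 - q * s) (2 * s / 8 - q) s := by
      have := ((hasDerivAt_pow 2 s).div_const 8).sub ((hasDerivAt_id s).const_mul q)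
      exact this.congr_deriv (by norm_num)
    have := hpoly.sub hlog
    refine this.congr_deriv ?_
    ring
  have hhmono : MonotoneOn h (Set.Ici (0 : ℝ)) := by
    apply monotoneOn_of_hasDerivWithinAt_nonneg (convex_Ici 0)
      (fun s _ => (hhderiv s).continuousAt.continuousWithinAt)
      (fun s hs => (hhderiv s).hasDerivWithinAt)
    intro s hs
    exact hgpos s (le_of_lt (by simpa using hs))
  have hh0 : h 0 = 0 := by simp [hh, hD]
  have hht : 0 ≤ h t := hh0 ▸ hhmono Set.self_mem_Ici ht ht
  have : Real.log (D t) ≤ t ^ 2 / 8 - q * t := by simp only [hh] at hht; linarith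
  exact (Real.log_le_iff_le_exp (hDpos t)).mp this


lemma binomPMF_nonneg {N : ℕ} {q : ℝ} (hq0 : 0 ≤ q) (hq1 : q ≤ 1) (k : ℕ) :
    0 ≤ binomPMF N q k := by
  have h1 : (0:ℝ) ≤ 1 - q := by linarith
  unfold binomPMF; positivity

lemma binomPMF_total (N : ℕ) (q : ℝ) : ∑ k ∈ Finset.range (N + 1), binomPMF N q k = 1 := by
  have := add_pow q (1 - q) N
  simp only [add_sub_cancel, one_pow] at this
  conv_rhs => rw [this]
  exact Finset.sum_congr rfl fun k _ => by unfold binomPMF; ring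

/-- Chernoff/Hoeffding lower-tail bound for the binomial distribution. -/
lemma binom_lower_tail (N : ℕ) (q : ℝ) (hq : 1 / 2 ≤ q) (hq1 : q ≤ 1) :
    ∑ k ∈ (Finset.range (N + 1)).filter (fun k : ℕ => ¬((N : ℝ) / 2 < (k : ℝ))),
      binomPMF N q k ≤ Real.exp (-2 * N * (1 / 2 - q) ^ 2) := by
  have hq0 : (0:ℝ) ≤ q := by linarith
  set t : ℝ := 4 * (q - 1 / 2) with htdef
  have ht : 0 ≤ t := by simp only [htdef]; linarith
  have hstep1 : ∑ k ∈ (Finset.range (N + 1)).filter (fun k : ℕ => ¬((N : ℝ) / 2 < (k : ℝ))),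
      binomPMF N q k
      ≤ ∑ k ∈ Finset.range (N + 1),
          binomPMF N q k * Real.exp (t * ((N : ℝ) / 2 - k)) := by
    calc ∑ k ∈ (Finset.range (N + 1)).filter (fun k : ℕ => ¬((N : ℝ) / 2 < (k : ℝ))),
        binomPMF N q k
        ≤ ∑ k ∈ (Finset.range (N + 1)).filter (fun k : ℕ => ¬((N : ℝ) / 2 < (k : ℝ))),
            binomPMF N q k * Real.exp (t * ((N : ℝ) / 2 - k)) := by
          apply Finset.sum_le_sum
          intro k hk
          have hk2 : (k : ℝ) ≤ (N : ℝ) / 2 := le_of_not_gt (Finset.mem_filter.mp hk).2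
          have : (1:ℝ) ≤ Real.exp (t * ((N : ℝ) / 2 - k)) := by
            rw [Real.one_le_exp_iff]
            have : (0:ℝ) ≤ (N : ℝ) / 2 - k := by linarith
            positivity
          exact le_mul_of_one_le_right (binomPMF_nonneg hq0 hq1 k) this
      _ ≤ _ := by
          apply Finset.sum_le_sum_of_subset_of_nonneg (Finset.filter_subset _ _)
          intro k _ _
          exact mul_nonneg (binomPMF_nonneg hq0 hq1 k) (Real.exp_pos _).le
  have hstep2 : ∑ k ∈ Finset.range (N + 1),
      binomPMF N q k * Real.exp (t * ((N : ℝ) / 2 - k))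
      = Real.exp (t * N / 2) * (q * Real.exp (-t) + (1 - q)) ^ N := by
    rw [add_pow, Finset.mul_sum]
    apply Finset.sum_congr rfl
    intro k _
    have he : Real.exp (t * ((N : ℝ) / 2 - k))
        = Real.exp (t * N / 2) * Real.exp ((k : ℝ) * (-t)) := by
      rw [← Real.exp_add]; congr 1; ring
    rw [mul_pow, ← Real.exp_nat_mul]
    unfold binomPMF
    rw [he]
    ring
  have hstep3 : (q * Real.exp (-t) + (1 - q)) ^ N ≤ Real.exp (t ^ 2 / 8 - q * t) ^ N := by
    apply pow_le_pow_left₀ _ (hoeff_mgf q hq0 hq1 ht)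
    have : 0 ≤ q * Real.exp (-t) := by positivity
    linarith
  have hstep4 : Real.exp (t * N / 2) * Real.exp (t ^ 2 / 8 - q * t) ^ N
      = Real.exp (-2 * N * (1 / 2 - q) ^ 2) := by
    rw [← Real.exp_nat_mul, ← Real.exp_add]
    congr 1
    simp only [htdef]
    ring
  calc ∑ k ∈ (Finset.range (N + 1)).filter (fun k : ℕ => ¬((N : ℝ) / 2 < (k : ℝ))),
      binomPMF N q k
      ≤ ∑ k ∈ Finset.range (N + 1), binomPMF N q k * Real.exp (t * ((N : ℝ) / 2 - k)) := hstep1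
    _ = Real.exp (t * N / 2) * (q * Real.exp (-t) + (1 - q)) ^ N := hstep2
    _ ≤ Real.exp (t * N / 2) * Real.exp (t ^ 2 / 8 - q * t) ^ N := by
        exact mul_le_mul_of_nonneg_left hstep3 (Real.exp_pos _).le
    _ = Real.exp (-2 * N * (1 / 2 - q) ^ 2) := hstep4

lemma majTail_ge (N : ℕ) (q : ℝ) (hq : 1 / 2 ≤ q) (hq1 : q ≤ 1) :
    1 - Real.exp (-2 * N * (1 / 2 - q) ^ 2) ≤ majTail N q := by
  have hsplit := Finset.sum_filter_add_sum_filter_not (Finset.range (N + 1))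
    (fun k : ℕ => (N : ℝ) / 2 < (k : ℝ)) (binomPMF N q)
  rw [binomPMF_total N q] at hsplit
  have := binom_lower_tail N q hq hq1
  unfold majTail
  linarith

lemma majTail_nonneg (N : ℕ) {q : ℝ} (hq0 : 0 ≤ q) (hq1 : q ≤ 1) : 0 ≤ majTail N q :=
  by unfold majTail; exact Finset.sum_nonneg fun k _ => binomPMF_nonneg hq0 hq1 k


/-- MAD lower bound (Proposition 2, lower part): in the 2-round debate model,
`P(N_cor⁽²⁾ > N_a/2) ≥ ∑_{j > j*} ω_j (1 - exp(-2N_a(1/2 - e^{α(j-N_a)})²))`. -/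
theorem mad_lower_bound (Na : ℕ) (hNa : 0 < Na) (α p : ℝ)
    (hα : 0 < α) (hp0 : 0 ≤ p) (hp1 : p ≤ 1) :
    (∑ j ∈ (Finset.range (Na + 1)).filter
          (fun j : ℕ => ⌊(Na : ℝ) - Real.log 2 / α⌋ < (j : ℤ)),
        ((Na.choose j : ℝ) * p ^ j * (1 - p) ^ (Na - j)) *
          (1 - Real.exp (-2 * Na * (1 / 2 - Real.exp (α * ((j : ℝ) - Na))) ^ 2)))
      ≤ ∑ j ∈ Finset.range (Na + 1),
          ((Na.choose j : ℝ) * p ^ j * (1 - p) ^ (Na - j)) *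
            majTail Na (Real.exp (α * ((j : ℝ) - Na))) := by
  have hsub : ∀ j ∈ (Finset.range (Na + 1)).filter
      (fun j : ℕ => ⌊(Na : ℝ) - Real.log 2 / α⌋ < (j : ℤ)),
      ((Na.choose j : ℝ) * p ^ j * (1 - p) ^ (Na - j)) *
        (1 - Real.exp (-2 * Na * (1 / 2 - Real.exp (α * ((j : ℝ) - Na))) ^ 2))
      ≤ ((Na.choose j : ℝ) * p ^ j * (1 - p) ^ (Na - j)) *
          majTail Na (Real.exp (α * ((j : ℝ) - Na))) := by
    intro j hj
    obtain ⟨hjr, hjf⟩ := Finset.mem_filter.mp hj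
    have hjNa : (j : ℝ) ≤ (Na : ℝ) := by
      exact_mod_cast Nat.lt_succ_iff.mp (Finset.mem_range.mp hjr)
    have hfl : (Na : ℝ) - Real.log 2 / α < (j : ℝ) := by
      have := Int.floor_lt.mp hjf
      exact_mod_cast this
    have hd : Real.log 2 / α * α = Real.log 2 := div_mul_cancel₀ _ hα.ne'
    have hexp : -Real.log 2 < α * ((j : ℝ) - Na) := by
      nlinarith [mul_pos hα (sub_pos.mpr hfl)]
    have hhalf : (1 : ℝ) / 2 ≤ Real.exp (α * ((j : ℝ) - Na)) := by
      have h2 : Real.exp (-Real.log 2) = 1 / 2 := by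
        rw [Real.exp_neg, Real.exp_log (by norm_num : (0:ℝ) < 2)]; norm_num
      rw [← h2]
      exact (Real.exp_le_exp.mpr hexp.le)
    have hone : Real.exp (α * ((j : ℝ) - Na)) ≤ 1 := by
      apply Real.exp_le_one_iff.mpr
      have : (j : ℝ) - Na ≤ 0 := by linarith
      exact mul_nonpos_of_nonneg_of_nonpos hα.le this
    have hω : 0 ≤ (Na.choose j : ℝ) * p ^ j * (1 - p) ^ (Na - j) := by
      have h1 : (0:ℝ) ≤ 1 - p := by linarith
      positivity
    exact mul_le_mul_of_nonneg_left (majTail_ge Na _ hhalf hone) hω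
  calc (∑ j ∈ (Finset.range (Na + 1)).filter
          (fun j : ℕ => ⌊(Na : ℝ) - Real.log 2 / α⌋ < (j : ℤ)),
        ((Na.choose j : ℝ) * p ^ j * (1 - p) ^ (Na - j)) *
          (1 - Real.exp (-2 * Na * (1 / 2 - Real.exp (α * ((j : ℝ) - Na))) ^ 2)))
      ≤ ∑ j ∈ (Finset.range (Na + 1)).filter
            (fun j : ℕ => ⌊(Na : ℝ) - Real.log 2 / α⌋ < (j : ℤ)),
          ((Na.choose j : ℝ) * p ^ j * (1 - p) ^ (Na - j)) *
            majTail Na (Real.exp (α * ((j : ℝ) - Na))) := Finset.sum_le_sum hsub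
    _ ≤ _ := by
        apply Finset.sum_le_sum_of_subset_of_nonneg (Finset.filter_subset _ _)
        intro j hjr _
        have hjNa : (j : ℝ) ≤ (Na : ℝ) := by
          exact_mod_cast Nat.lt_succ_iff.mp (Finset.mem_range.mp hjr)
        have hone : Real.exp (α * ((j : ℝ) - Na)) ≤ 1 := by
          apply Real.exp_le_one_iff.mpr
          have : (j : ℝ) - Na ≤ 0 := by linarith
          exact mul_nonpos_of_nonneg_of_nonpos hα.le this
        have h1 : (0:ℝ) ≤ 1 - p := by linarith
        exact mul_nonneg (by positivity)
          (majTail_nonneg Na (Real.exp_pos _).le hone)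
end
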